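/- Tensorized lower bound for the specific relative entropy: Let M = (M¹,…,M^l) and N = (N¹,…,N^l) be continuous martingales on [0,1] with the coordinates N¹,…,N^l mutually independent. Then h_l( L(M) | L(N) ) ≥ Σ_{i=1}^l h_1( L(M^i) | L(N^i) ). -/

import Mathlib

open MeasureTheory ProbabilityTheory Filter Set
open scoped ENNReal NNReal Matrix Classical

noncomputable section

/-- The path space `C([0,1]; ℝ^l)`. -/
abbrev PathSpace (l : ℕ) : Type := C(Set.Icc (0:ℝ) 1, Fin l → ℝ)

instance pathSpaceMS (l : ℕ) : MeasurableSpace (PathSpace l) := borel _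
instance pathSpaceBorel (l : ℕ) : BorelSpace (PathSpace l) := ⟨rfl⟩

/-- Relative entropy `H(μ|ν) = ∫ log (dμ/dν) dμ` if `μ ≪ ν` (and the integral exists),
`+∞` otherwise. -/
def relEnt {α : Type*} [MeasurableSpace α] (μ ν : Measure α) : EReal :=
  if μ ≪ ν ∧ Integrable (fun x => Real.log (μ.rnDeriv ν x).toReal) μ then
    ((∫ x, Real.log (μ.rnDeriv ν x).toReal ∂μ : ℝ) : EReal)
  else ⊤

lemma div_mem_Icc (n : ℕ) (k : Fin (n+1)) : ((k : ℝ)/(n : ℝ)) ∈ Set.Icc (0:ℝ) 1 := by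
  constructor
  · positivity
  · rcases Nat.eq_zero_or_pos n with h | h
    · simp [h]
    · rw [div_le_one (by exact_mod_cast h)]
      exact_mod_cast Nat.lt_succ_iff.mp k.isLt

/-- The time point `k/n` as an element of `[0,1]`. -/
def gridPt (n : ℕ) (k : Fin (n+1)) : Set.Icc (0:ℝ) 1 := ⟨(k : ℝ)/(n : ℝ), div_mem_Icc n k⟩

/-- Projection of a path onto its values at the grid `k/n`, `k = 0,…,n`. -/
def finProj (l n : ℕ) : PathSpace l → (Fin (n+1) → (Fin l → ℝ)) :=
  fun ω k => ω (gridPt n k)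

/-- `H(Q|P)|_{F^n}`: the relative entropy of the finite-dimensional projections. -/
def Hn (l n : ℕ) (Q P : Measure (PathSpace l)) : EReal :=
  relEnt (Q.map (finProj l n)) (P.map (finProj l n))

/-- The specific relative entropy `h_l(Q|P) = liminf_n 2^{-n} H(Q|P)|_{F^{2^n}}`. -/
def specRelEnt (l : ℕ) (Q P : Measure (PathSpace l)) : EReal :=
  Filter.liminf (fun n : ℕ => ((((2:ℝ)^n)⁻¹ : ℝ) : EReal) * Hn l (2^n) Q P) Filter.atTop

/-- The `i`-th coordinate of a multidimensional path, as a one-dimensional path. -/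
def coordPath (l : ℕ) (i : Fin l) (ω : PathSpace l) : PathSpace 1 :=
  ⟨fun t _ => ω t i, by
    apply continuous_pi
    intro _
    exact (continuous_apply i).comp ω.continuous⟩

/-! ### Auxiliary lemmas -/

section EntropyAux

variable {α : Type*} [MeasurableSpace α]

lemma relEnt_eq (μ ν : Measure α) :
    relEnt μ ν = if μ ≪ ν ∧ Integrable (llr μ ν) μ then
      ((∫ x, llr μ ν x ∂μ : ℝ) : EReal) else ⊤ := by
  rw [llr_def]; rfl

lemma aux_mul_ofReal_neg_log_le (c : ℝ≥0∞) :
    c * ENNReal.ofReal (-(Real.log c.toReal)) ≤ 1 := by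
  rcases eq_or_ne c ⊤ with rfl | htop
  · simp
  rcases eq_or_ne c 0 with rfl | h0
  · simp
  have ht : 0 < c.toReal := ENNReal.toReal_pos h0 htop
  have hlog : -Real.log c.toReal ≤ c.toReal⁻¹ - 1 := by
    have h := Real.log_le_sub_one_of_pos (inv_pos.2 ht)
    rwa [Real.log_inv] at h
  calc c * ENNReal.ofReal (-(Real.log c.toReal))
      ≤ c * ENNReal.ofReal (c.toReal⁻¹) :=
        mul_le_mul_right (ENNReal.ofReal_le_ofReal (by linarith)) c
    _ = c * c⁻¹ := by rw [ENNReal.ofReal_inv_of_pos ht, ENNReal.ofReal_toReal htop]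
    _ ≤ 1 := ENNReal.mul_inv_le_one c

lemma lintegral_ofReal_neg_llr_le {μ ν : Measure α} [IsProbabilityMeasure μ]
    [IsProbabilityMeasure ν] (h : μ ≪ ν) :
    ∫⁻ x, ENNReal.ofReal (-(llr μ ν x)) ∂μ ≤ 1 := by
  have hfm := Measure.measurable_rnDeriv μ ν
  have hmeas : Measurable fun x => ENNReal.ofReal (-(llr μ ν x)) :=
    (measurable_llr μ ν).neg.ennreal_ofReal
  rw [← MeasureTheory.lintegral_rnDeriv_mul h hmeas.aemeasurable]
  calc ∫⁻ x, μ.rnDeriv ν x * ENNReal.ofReal (-(llr μ ν x)) ∂ν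
      ≤ ∫⁻ _, 1 ∂ν := lintegral_mono fun x => aux_mul_ofReal_neg_log_le (μ.rnDeriv ν x)
    _ = 1 := by simp

/-- The negative part of the log-likelihood ratio is always integrable. -/
lemma integrable_toReal_ofReal_neg_llr {μ ν : Measure α} [IsProbabilityMeasure μ]
    [IsProbabilityMeasure ν] (h : μ ≪ ν) :
    Integrable (fun x => (ENNReal.ofReal (-(llr μ ν x))).toReal) μ :=
  integrable_toReal_of_lintegral_ne_top ((measurable_llr μ ν).neg.ennreal_ofReal).aemeasurable
    ((lt_of_le_of_lt (lintegral_ofReal_neg_llr_le h) ENNReal.one_lt_top).ne)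

lemma relEnt_nonneg (μ ν : Measure α) [IsProbabilityMeasure μ] [IsProbabilityMeasure ν] :
    (0 : EReal) ≤ relEnt μ ν := by
  rw [relEnt_eq]
  split_ifs with h
  · obtain ⟨hac, hint⟩ := h
    have hfm := Measure.measurable_rnDeriv μ ν
    have hlint : ∫⁻ x, (μ.rnDeriv ν x)⁻¹ ∂μ ≤ 1 := by
      rw [← MeasureTheory.lintegral_rnDeriv_mul hac
        (Measurable.aemeasurable (f := fun x => (μ.rnDeriv ν x)⁻¹) hfm.inv)]
      calc ∫⁻ x, μ.rnDeriv ν x * (μ.rnDeriv ν x)⁻¹ ∂ν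
          ≤ ∫⁻ _, 1 ∂ν := lintegral_mono fun x => ENNReal.mul_inv_le_one (μ.rnDeriv ν x)
        _ = 1 := by simp
    have hint2 : Integrable (fun x => ((μ.rnDeriv ν x)⁻¹).toReal) μ :=
      integrable_toReal_of_lintegral_ne_top hfm.inv.aemeasurable
        ((lt_of_le_of_lt hlint ENNReal.one_lt_top).ne)
    have hintle : ∫ x, ((μ.rnDeriv ν x)⁻¹).toReal ∂μ ≤ 1 := by
      rw [integral_toReal (Measurable.aemeasurable (f := fun x => (μ.rnDeriv ν x)⁻¹) hfm.inv)]
      · calc (∫⁻ x, (μ.rnDeriv ν x)⁻¹ ∂μ).toReal ≤ (1 : ℝ≥0∞).toReal :=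
            ENNReal.toReal_mono ENNReal.one_ne_top hlint
          _ = 1 := by simp
      · filter_upwards [Measure.rnDeriv_pos hac] with x hx
        exact ENNReal.inv_lt_top.2 hx
    have hae : ∀ᵐ x ∂μ, -(llr μ ν x) ≤ ((μ.rnDeriv ν x)⁻¹).toReal - 1 := by
      filter_upwards [Measure.rnDeriv_pos hac, hac.ae_le (Measure.rnDeriv_lt_top μ ν)]
        with x hpos hlt
      have ht : 0 < (μ.rnDeriv ν x).toReal := ENNReal.toReal_pos hpos.ne' hlt.ne
      have hlog := Real.log_le_sub_one_of_pos (inv_pos.2 ht)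
      rw [Real.log_inv] at hlog
      simp only [llr_def, ENNReal.toReal_inv]
      linarith
    have hfin := integral_mono_ae hint.neg (hint2.sub (integrable_const 1)) hae
    simp only [Pi.neg_apply, Pi.sub_apply] at hfin
    rw [integral_neg, integral_sub hint2 (integrable_const 1)] at hfin
    simp only [integral_const, measure_univ, ENNReal.toReal_one, probReal_univ, smul_eq_mul, one_mul] at hfin
    have h0 : (0:ℝ) ≤ ∫ x, llr μ ν x ∂μ := by linarith
    exact_mod_cast h0
  · exact le_top

lemma lintegral_prod_of_iIndepFun {ι : Type*} {P : Measure α} [IsProbabilityMeasure P]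
    {F : ι → α → ℝ≥0∞}
    (h : iIndepFun F P) (hm : ∀ i, Measurable (F i))
    (s : Finset ι) :
    ∫⁻ a, ∏ i ∈ s, F i a ∂P = ∏ i ∈ s, ∫⁻ a, F i a ∂P := by
  classical
  induction s using Finset.induction with
  | empty => simp
  | @insert j s hj ih =>
    have hindep : IndepFun (F j) (∏ k ∈ s, F k) P :=
      (h.indepFun_finsetProd_of_notMem hm hj).symm
    have hms : Measurable (∏ k ∈ s, F k) := by
      rw [Finset.prod_fn]
      exact Finset.measurable_prod s fun k _ => hm k
    have hmul := lintegral_mul_eq_lintegral_mul_lintegral_of_indepFun (hm j) hms hindep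
    simp only [Pi.mul_apply, Finset.prod_apply] at hmul
    simp only [Finset.prod_insert hj]
    rw [hmul, ih]

lemma iIndepFun_map {ι : Type*} {E : ι → Type*} [∀ i, MeasurableSpace (E i)]
    {Ω : Type*} [MeasurableSpace Ω] {ν : Measure Ω} {h : Ω → α} (hh : Measurable h)
    (π : ∀ i, α → E i) (hπ : ∀ i, Measurable (π i))
    (hind : iIndepFun (fun i => π i ∘ h) ν) :
    iIndepFun π (ν.map h) := by
  rw [iIndepFun_iff_measure_inter_preimage_eq_mul] at hind ⊢
  intro S sets hsets
  have hmeas : MeasurableSet (⋂ i ∈ S, π i ⁻¹' sets i) :=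
    Set.Finite.measurableSet_biInter (Finset.finite_toSet S)
      (fun i hi => (hπ i) (hsets i hi))
  rw [Measure.map_apply hh hmeas]
  have hpre : h ⁻¹' (⋂ i ∈ S, π i ⁻¹' sets i) = ⋂ i ∈ S, (π i ∘ h) ⁻¹' sets i := by
    simp only [Set.preimage_iInter, Set.preimage_comp]
  rw [hpre, hind S hsets]
  refine Finset.prod_congr rfl fun i hi => ?_
  rw [Measure.map_apply hh ((hπ i) (hsets i hi))]
  rfl

/-- **Superadditivity of relative entropy** over independent coordinates of the
reference measure. -/
lemma relEnt_superadd {ι : Type*} [Fintype ι] {E : ι → Type*} [∀ i, MeasurableSpace (E i)]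
    {Q P : Measure α} [IsProbabilityMeasure Q] [IsProbabilityMeasure P]
    (π : ∀ i, α → E i) (hπ : ∀ i, Measurable (π i))
    (hIndep : iIndepFun π P) :
    ∑ i, relEnt (Q.map (π i)) (P.map (π i)) ≤ relEnt Q P := by
  classical
  by_cases hQ : Q ≪ P ∧ Integrable (llr Q P) Q
  swap
  · rw [relEnt_eq Q P, if_neg hQ]; exact le_top
  obtain ⟨hQP, hint⟩ := hQ
  have hfm : Measurable (Q.rnDeriv P) := Measure.measurable_rnDeriv Q P
  set f := Q.rnDeriv P with hfdef
  haveI hQi : ∀ i, IsProbabilityMeasure (Q.map (π i)) :=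
    fun i => Measure.isProbabilityMeasure_map (hπ i).aemeasurable
  haveI hPi : ∀ i, IsProbabilityMeasure (P.map (π i)) :=
    fun i => Measure.isProbabilityMeasure_map (hπ i).aemeasurable
  have hQPi : ∀ i, Q.map (π i) ≪ P.map (π i) := fun i => hQP.map (hπ i)
  set g : ∀ i, E i → ℝ≥0∞ := fun i => (Q.map (π i)).rnDeriv (P.map (π i)) with hgdef
  have hgm : ∀ i, Measurable (g i) := fun i => Measure.measurable_rnDeriv _ _
  set F : ι → α → ℝ≥0∞ := fun i a => g i (π i a) with hFdef
  have hFm : ∀ i, Measurable (F i) := fun i => (hgm i).comp (hπ i)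
  set G : α → ℝ≥0∞ := fun a => ∏ i, F i a with hGdef
  have hGm : Measurable G := Finset.measurable_prod _ fun i _ => hFm i
  -- the coordinate log-likelihood ratios, read at the level of `α`
  set L : ι → α → ℝ := fun i a => llr (Q.map (π i)) (P.map (π i)) (π i a) with hLdef
  have hLm : ∀ i, Measurable (L i) := fun i => (measurable_llr _ _).comp (hπ i)
  -- (F1) each `F i` has `P`-integral one
  have hF1 : ∀ i, ∫⁻ a, F i a ∂P = 1 := by
    intro i
    rw [hFdef]
    rw [← lintegral_map (hgm i) (hπ i), Measure.lintegral_rnDeriv (hQPi i)]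
    simp
  -- (F2) `G` has `P`-integral one
  have hG1 : ∫⁻ a, G a ∂P = 1 := by
    have hIndepF : iIndepFun F P := by
      have := hIndep.comp g hgm
      exact this
    rw [hGdef]
    rw [lintegral_prod_of_iIndepFun hIndepF hFm Finset.univ]
    simp [hF1]
  -- a.e. positivity and finiteness
  have hf_pos : ∀ᵐ a ∂Q, 0 < f a := Measure.rnDeriv_pos hQP
  have hf_lt : ∀ᵐ a ∂Q, f a < ⊤ := hQP.ae_le (Measure.rnDeriv_lt_top Q P)
  have hF_pos : ∀ i, ∀ᵐ a ∂Q, 0 < F i a := by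
    intro i
    have h1 : ∀ᵐ y ∂(Q.map (π i)), 0 < g i y := Measure.rnDeriv_pos (hQPi i)
    exact (ae_map_iff (hπ i).aemeasurable
      (measurableSet_lt measurable_const (hgm i))).1 h1
  have hF_lt : ∀ i, ∀ᵐ a ∂Q, F i a < ⊤ := by
    intro i
    have h1 : ∀ᵐ y ∂(Q.map (π i)), g i y < ⊤ :=
      (hQPi i).ae_le (Measure.rnDeriv_lt_top _ _)
    exact (ae_map_iff (hπ i).aemeasurable
      (measurableSet_lt (hgm i) measurable_const)).1 h1
  have hgood : ∀ᵐ a ∂Q, (0 < f a ∧ f a < ⊤) ∧ ∀ i, 0 < F i a ∧ F i a < ⊤ := by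
    filter_upwards [hf_pos, hf_lt, ae_all_iff.2 hF_pos, ae_all_iff.2 hF_lt]
      with a h1 h2 h3 h4
    exact ⟨⟨h1, h2⟩, fun i => ⟨h3 i, h4 i⟩⟩
  -- the correction term φ
  have hGfm : Measurable fun a => G a / f a := hGm.div hfm
  have hφlint : ∫⁻ a, G a / f a ∂Q ≤ 1 := by
    rw [← MeasureTheory.lintegral_rnDeriv_mul hQP hGfm.aemeasurable]
    calc ∫⁻ a, Q.rnDeriv P a * (G a / f a) ∂P
        ≤ ∫⁻ a, G a ∂P := lintegral_mono fun a => ENNReal.mul_div_le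
      _ = 1 := hG1
  set φ : α → ℝ := fun a => (G a / f a).toReal with hφdef
  have hφint : Integrable φ Q :=
    integrable_toReal_of_lintegral_ne_top hGfm.aemeasurable
      ((lt_of_le_of_lt hφlint ENNReal.one_lt_top).ne)
  have hφle : ∫ a, φ a ∂Q ≤ 1 := by
    rw [hφdef]
    rw [integral_toReal hGfm.aemeasurable (ae_lt_top hGfm
      ((lt_of_le_of_lt hφlint ENNReal.one_lt_top).ne))]
    calc (∫⁻ a, G a / f a ∂Q).toReal ≤ (1 : ℝ≥0∞).toReal :=
        ENNReal.toReal_mono ENNReal.one_ne_top hφlint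
      _ = 1 := by simp
  have hφ0 : ∀ a, 0 ≤ φ a := fun a => ENNReal.toReal_nonneg
  -- the negative parts
  set Neg : ι → α → ℝ := fun i a => (ENNReal.ofReal (-(L i a))).toReal with hNdef
  have hNint : ∀ i, Integrable (Neg i) Q := by
    intro i
    refine integrable_toReal_of_lintegral_ne_top
      ((hLm i).neg.ennreal_ofReal).aemeasurable ?_
    have : ∫⁻ a, ENNReal.ofReal (-(L i a)) ∂Q
        = ∫⁻ y, ENNReal.ofReal (-(llr (Q.map (π i)) (P.map (π i)) y)) ∂(Q.map (π i)) := by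
      rw [lintegral_map (f := fun y => ENNReal.ofReal (-(llr (Q.map (π i)) (P.map (π i)) y)))
        ((measurable_llr _ _).neg.ennreal_ofReal) (hπ i)]
    rw [this]
    exact (lt_of_le_of_lt (lintegral_ofReal_neg_llr_le (hQPi i)) ENNReal.one_lt_top).ne
  have hNneg : ∀ i a, -(L i a) ≤ Neg i a := by
    intro i a
    rw [hNdef]
    simp only [ENNReal.toReal_ofReal']
    exact le_max_left _ _
  have hN0 : ∀ i a, 0 ≤ Neg i a := fun i a => ENNReal.toReal_nonneg
  -- key pointwise inequality: ∑ᵢ Lᵢ ≤ llr Q P + (φ - 1) a.e.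
  have hkey : ∀ᵐ a ∂Q, ∑ i, L i a ≤ llr Q P a + (φ a - 1) := by
    filter_upwards [hgood] with a ha
    obtain ⟨⟨hfp, hflt⟩, hFa⟩ := ha
    have htf : 0 < (f a).toReal := ENNReal.toReal_pos hfp.ne' hflt.ne
    have htFi : ∀ i, 0 < (F i a).toReal :=
      fun i => ENNReal.toReal_pos (hFa i).1.ne' (hFa i).2.ne
    have hGt : (G a).toReal = ∏ i, (F i a).toReal := ENNReal.toReal_prod _ _
    have htG : 0 < (G a).toReal := by
      rw [hGt]; exact Finset.prod_pos fun i _ => htFi i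
    have hsum : ∑ i, L i a = Real.log (G a).toReal := by
      rw [hGt, Real.log_prod fun i _ => (htFi i).ne']
      refine Finset.sum_congr rfl fun i _ => rfl
    have hφa : φ a = (G a).toReal / (f a).toReal := by
      rw [hφdef]; exact ENNReal.toReal_div _ _
    have hlogdiv : Real.log (G a).toReal - Real.log (f a).toReal
        = Real.log ((G a).toReal / (f a).toReal) :=
      (Real.log_div htG.ne' htf.ne').symm
    have hlb := Real.log_le_sub_one_of_pos (div_pos htG htf)
    have hllr : llr Q P a = Real.log (f a).toReal := rfl
    rw [hsum, hllr, hφa]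
    linarith
  -- integrability of each `L i`
  have hLint : ∀ i, Integrable (L i) Q := by
    intro i
    have hbound : ∀ᵐ a ∂Q, ‖L i a‖
        ≤ |llr Q P a| + φ a + ∑ j, Neg j a := by
      filter_upwards [hkey] with a ha
      rw [Real.norm_eq_abs, abs_le]
      constructor
      · have h1 : -(L i a) ≤ Neg i a := hNneg i a
        have h2 : Neg i a ≤ ∑ j, Neg j a :=
          Finset.single_le_sum (fun j _ => hN0 j a) (Finset.mem_univ i)
        have h3 : (0:ℝ) ≤ |llr Q P a| + φ a := by positivity
        linarith
      · have h1 : L i a = (∑ j, L j a) - ∑ j ∈ Finset.univ.erase i, L j a := by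
          rw [← Finset.add_sum_erase _ _ (Finset.mem_univ i)]; ring
        have h2 : -(∑ j ∈ Finset.univ.erase i, L j a)
            ≤ ∑ j ∈ Finset.univ.erase i, Neg j a := by
          rw [← Finset.sum_neg_distrib]
          exact Finset.sum_le_sum fun j _ => hNneg j a
        have h3 : ∑ j ∈ Finset.univ.erase i, Neg j a ≤ ∑ j, Neg j a :=
          Finset.sum_le_sum_of_subset_of_nonneg (Finset.erase_subset _ _)
            (fun j _ _ => hN0 j a)
        have h4 : llr Q P a ≤ |llr Q P a| := le_abs_self _
        have h5 : φ a - 1 ≤ φ a := by linarith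
        linarith
    exact Integrable.mono' ((hint.abs.add hφint).add
      (integrable_finset_sum _ fun j _ => hNint j)) ((hLm i).aestronglyMeasurable) hbound
  -- the sum of the marginal entropies is the integral of `∑ L i`
  have hLsum_int : Integrable (fun a => ∑ i, L i a) Q :=
    integrable_finset_sum _ fun i _ => hLint i
  have hineq : ∑ i, ∫ a, L i a ∂Q ≤ ∫ a, llr Q P a ∂Q := by
    rw [← integral_finset_sum _ fun i _ => hLint i]
    have h2 : Integrable (fun a => llr Q P a + (φ a - 1)) Q :=
      hint.add (hφint.sub (integrable_const 1))
    have hφ1 : Integrable (fun a => φ a - 1) Q := hφint.sub (integrable_const 1)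
    have h3 := integral_mono_ae hLsum_int h2 hkey
    have h4 : ∫ a, (llr Q P a + (φ a - 1)) ∂Q
        = ∫ a, llr Q P a ∂Q + ∫ a, (φ a - 1) ∂Q := integral_add hint hφ1
    have h5 : ∫ a, (φ a - 1) ∂Q = ∫ a, φ a ∂Q - ∫ a, (1:ℝ) ∂Q :=
      integral_sub hφint (integrable_const 1)
    have h6 : ∫ a, (1:ℝ) ∂Q = 1 := by simp
    rw [h4, h5, h6] at h3
    linarith
  -- identify each marginal relative entropy
  have hmarg : ∀ i, relEnt (Q.map (π i)) (P.map (π i)) = ((∫ a, L i a ∂Q : ℝ) : EReal) := by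
    intro i
    have hi1 : Integrable (llr (Q.map (π i)) (P.map (π i))) (Q.map (π i)) := by
      rw [integrable_map_measure (stronglyMeasurable_llr _ _).aestronglyMeasurable
        (hπ i).aemeasurable]
      exact hLint i
    rw [relEnt_eq, if_pos ⟨hQPi i, hi1⟩]
    congr 1
    rw [integral_map (hπ i).aemeasurable (stronglyMeasurable_llr _ _).aestronglyMeasurable]
  calc ∑ i, relEnt (Q.map (π i)) (P.map (π i))
      = ((∑ i, ∫ a, L i a ∂Q : ℝ) : EReal) := by
        rw [Finset.sum_congr rfl fun i _ => hmarg i]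
        exact (map_sum (⟨⟨Real.toEReal, EReal.coe_zero⟩, EReal.coe_add⟩ : ℝ →+ EReal)
          _ Finset.univ).symm
    _ ≤ ((∫ a, llr Q P a ∂Q : ℝ) : EReal) := by exact_mod_cast hineq
    _ = relEnt Q P := by rw [relEnt_eq, if_pos ⟨hQP, hint⟩]

end EntropyAux

section PathAux

lemma measurable_finProj (l n : ℕ) : Measurable (finProj l n) := by
  apply measurable_pi_lambda
  intro k
  exact (continuous_eval_const (gridPt n k)).measurable

lemma continuous_coordPath (l : ℕ) (i : Fin l) : Continuous (coordPath l i) := by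
  have h : coordPath l i = fun ω : PathSpace l =>
      (ContinuousMap.mk (fun x : Fin l → ℝ => fun _ : Fin 1 => x i)
        (by continuity)).comp ω := by
    funext ω; ext t j; rfl
  rw [h]
  exact ContinuousMap.continuous_postcomp _

lemma measurable_coordPath (l : ℕ) (i : Fin l) : Measurable (coordPath l i) :=
  (continuous_coordPath l i).measurable

/-- EReal distributivity over finite sums of nonnegative terms. -/
lemma ereal_mul_finset_sum {ι : Type*} (s : Finset ι) (c : EReal) (x : ι → EReal)
    (hx : ∀ i, 0 ≤ x i) : c * ∑ i ∈ s, x i = ∑ i ∈ s, c * x i := by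
  classical
  induction s using Finset.induction with
  | empty => simp
  | @insert j s hj ih =>
    rw [Finset.sum_insert hj, Finset.sum_insert hj,
      EReal.left_distrib_of_nonneg (hx j) (Finset.sum_nonneg fun i _ => hx i), ih]

/-- Superadditivity of liminf for finitely many `EReal`-valued sequences. -/
lemma ereal_sum_liminf_le {ι : Type*} (s : Finset ι) (u : ι → ℕ → EReal) :
    ∑ i ∈ s, Filter.liminf (u i) Filter.atTop
      ≤ Filter.liminf (fun n => ∑ i ∈ s, u i n) Filter.atTop := by
  classical
  induction s using Finset.induction with
  | empty => simp
  | @insert j s hj ih =>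
    rw [Finset.sum_insert hj]
    calc Filter.liminf (u j) Filter.atTop + ∑ i ∈ s, Filter.liminf (u i) Filter.atTop
        ≤ Filter.liminf (u j) Filter.atTop
          + Filter.liminf (fun n => ∑ i ∈ s, u i n) Filter.atTop := by
          exact add_le_add le_rfl ih
      _ ≤ Filter.liminf (u j + fun n => ∑ i ∈ s, u i n) Filter.atTop := EReal.le_liminf_add
      _ = Filter.liminf (fun n => ∑ i ∈ insert j s, u i n) Filter.atTop := by
          apply Filter.liminf_congr
          filter_upwards with n
          simp [Finset.sum_insert hj]

end PathAux

/-- **Tensorized lower bound for the specific relative entropy.** If `M = (M¹,…,M^l)` and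
`N = (N¹,…,N^l)` are continuous martingales with the coordinates of `N` mutually
independent, then `h_l(L(M)|L(N)) ≥ Σ_i h_1(L(M^i)|L(N^i))`. -/
theorem specRelEnt_tensorized_lower_bound (l : ℕ)
    {Ω₁ Ω₂ : Type} [m₁ : MeasurableSpace Ω₁] [m₂ : MeasurableSpace Ω₂]
    (μ : Measure Ω₁) (ν : Measure Ω₂) [IsProbabilityMeasure μ] [IsProbabilityMeasure ν]
    (F₁ : Filtration ℝ m₁) (F₂ : Filtration ℝ m₂)
    (M : ℝ → Ω₁ → Fin l → ℝ) (N : ℝ → Ω₂ → Fin l → ℝ)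
    (ΦM : Ω₁ → PathSpace l) (ΦN : Ω₂ → PathSpace l)
    (hΦMmeas : Measurable ΦM) (hΦNmeas : Measurable ΦN)
    (hΦM : ∀ (ω : Ω₁) (t : ℝ) (ht : t ∈ Set.Icc (0:ℝ) 1), ΦM ω ⟨t, ht⟩ = M t ω)
    (hΦN : ∀ (ω : Ω₂) (t : ℝ) (ht : t ∈ Set.Icc (0:ℝ) 1), ΦN ω ⟨t, ht⟩ = N t ω)
    (hMmart : Martingale M F₁ μ) (hNmart : Martingale N F₂ ν)
    (hNindep : iIndepFun (m := fun _ : Fin l => pathSpaceMS 1)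
      (fun i ω => coordPath l i (ΦN ω)) ν) :
    ∑ i : Fin l, specRelEnt 1
        (μ.map fun ω => coordPath l i (ΦM ω))
        (ν.map fun ω => coordPath l i (ΦN ω))
      ≤ specRelEnt l (μ.map ΦM) (ν.map ΦN) := by
  have hMi : ∀ i : Fin l, Measurable fun ω => coordPath l i (ΦM ω) :=
    fun i => (measurable_coordPath l i).comp hΦMmeas
  have hNi : ∀ i : Fin l, Measurable fun ω => coordPath l i (ΦN ω) :=
    fun i => (measurable_coordPath l i).comp hΦNmeas
  -- pointwise (in the dyadic level) tensorization inequality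
  have hpoint : ∀ m : ℕ,
      ∑ i : Fin l, Hn 1 m (μ.map fun ω => coordPath l i (ΦM ω))
          (ν.map fun ω => coordPath l i (ΦN ω))
        ≤ Hn l m (μ.map ΦM) (ν.map ΦN) := by
    intro m
    set π : ∀ _ : Fin l, (Fin (m+1) → Fin l → ℝ) → (Fin (m+1) → Fin 1 → ℝ) :=
      fun i x k _ => x k i with hπdef
    have hπm : ∀ i, Measurable (π i) := by
      intro i
      apply measurable_pi_lambda
      intro k
      apply measurable_pi_lambda
      intro _
      exact (measurable_pi_apply i).comp (measurable_pi_apply k)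
    -- identify the measures
    have hQmap : (μ.map ΦM).map (finProj l m) = μ.map (finProj l m ∘ ΦM) :=
      Measure.map_map (measurable_finProj l m) hΦMmeas
    have hPmap : (ν.map ΦN).map (finProj l m) = ν.map (finProj l m ∘ ΦN) :=
      Measure.map_map (measurable_finProj l m) hΦNmeas
    have hcompM : ∀ i : Fin l,
        (π i) ∘ (finProj l m ∘ ΦM) = finProj 1 m ∘ (fun ω => coordPath l i (ΦM ω)) := by
      intro i; funext ω; funext k j; rfl
    have hcompN : ∀ i : Fin l,
        (π i) ∘ (finProj l m ∘ ΦN) = finProj 1 m ∘ (fun ω => coordPath l i (ΦN ω)) := by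
      intro i; funext ω; funext k j; rfl
    have hQi : ∀ i : Fin l,
        ((μ.map fun ω => coordPath l i (ΦM ω)).map (finProj 1 m))
          = (μ.map (finProj l m ∘ ΦM)).map (π i) := by
      intro i
      rw [Measure.map_map (measurable_finProj 1 m) (hMi i),
        Measure.map_map (hπm i) ((measurable_finProj l m).comp hΦMmeas)]
      rw [hcompM i]
    have hPi : ∀ i : Fin l,
        ((ν.map fun ω => coordPath l i (ΦN ω)).map (finProj 1 m))
          = (ν.map (finProj l m ∘ ΦN)).map (π i) := by
      intro i
      rw [Measure.map_map (measurable_finProj 1 m) (hNi i),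
        Measure.map_map (hπm i) ((measurable_finProj l m).comp hΦNmeas)]
      rw [hcompN i]
    -- independence of the coordinates under the projected law of N
    have h1 : iIndepFun
        (fun i => finProj 1 m ∘ (fun ω => coordPath l i (ΦN ω))) ν :=
      hNindep.comp (fun _ => finProj 1 m) (fun _ => measurable_finProj 1 m)
    have h2 : iIndepFun π
        (ν.map (finProj l m ∘ ΦN)) := by
      refine iIndepFun_map ((measurable_finProj l m).comp hΦNmeas) π hπm ?_
      have heq : (fun i : Fin l => (π i) ∘ (finProj l m ∘ ΦN))
          = fun i => finProj 1 m ∘ (fun ω => coordPath l i (ΦN ω)) :=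
        funext fun i => hcompN i
      rw [heq]
      exact h1
    haveI : IsProbabilityMeasure (μ.map (finProj l m ∘ ΦM)) :=
      Measure.isProbabilityMeasure_map ((measurable_finProj l m).comp hΦMmeas).aemeasurable
    haveI : IsProbabilityMeasure (ν.map (finProj l m ∘ ΦN)) :=
      Measure.isProbabilityMeasure_map ((measurable_finProj l m).comp hΦNmeas).aemeasurable
    calc ∑ i : Fin l, Hn 1 m (μ.map fun ω => coordPath l i (ΦM ω))
            (ν.map fun ω => coordPath l i (ΦN ω))
        = ∑ i : Fin l, relEnt ((μ.map (finProj l m ∘ ΦM)).map (π i))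
            ((ν.map (finProj l m ∘ ΦN)).map (π i)) := by
          refine Finset.sum_congr rfl fun i _ => ?_
          rw [Hn, hQi i, hPi i]
      _ ≤ relEnt (μ.map (finProj l m ∘ ΦM)) (ν.map (finProj l m ∘ ΦN)) :=
          relEnt_superadd π hπm h2
      _ = Hn l m (μ.map ΦM) (ν.map ΦN) := by rw [Hn, hQmap, hPmap]
  -- nonnegativity of the marginal entropies
  have hnonneg : ∀ (i : Fin l) (m : ℕ),
      (0:EReal) ≤ Hn 1 m (μ.map fun ω => coordPath l i (ΦM ω))
        (ν.map fun ω => coordPath l i (ΦN ω)) := by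
    intro i m
    haveI : IsProbabilityMeasure ((μ.map fun ω => coordPath l i (ΦM ω)).map (finProj 1 m)) := by
      haveI : IsProbabilityMeasure (μ.map fun ω => coordPath l i (ΦM ω)) :=
        Measure.isProbabilityMeasure_map (hMi i).aemeasurable
      exact Measure.isProbabilityMeasure_map (measurable_finProj 1 m).aemeasurable
    haveI : IsProbabilityMeasure ((ν.map fun ω => coordPath l i (ΦN ω)).map (finProj 1 m)) := by
      haveI : IsProbabilityMeasure (ν.map fun ω => coordPath l i (ΦN ω)) :=
        Measure.isProbabilityMeasure_map (hNi i).aemeasurable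
      exact Measure.isProbabilityMeasure_map (measurable_finProj 1 m).aemeasurable
    exact relEnt_nonneg _ _
  -- assemble via liminf superadditivity
  unfold specRelEnt
  calc ∑ i : Fin l, Filter.liminf (fun n : ℕ => ((((2:ℝ)^n)⁻¹ : ℝ) : EReal)
          * Hn 1 (2^n) (μ.map fun ω => coordPath l i (ΦM ω))
            (ν.map fun ω => coordPath l i (ΦN ω))) Filter.atTop
      ≤ Filter.liminf (fun n : ℕ => ∑ i : Fin l, ((((2:ℝ)^n)⁻¹ : ℝ) : EReal)
          * Hn 1 (2^n) (μ.map fun ω => coordPath l i (ΦM ω))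
            (ν.map fun ω => coordPath l i (ΦN ω))) Filter.atTop :=
        ereal_sum_liminf_le Finset.univ _
    _ ≤ Filter.liminf (fun n : ℕ => ((((2:ℝ)^n)⁻¹ : ℝ) : EReal)
          * Hn l (2^n) (μ.map ΦM) (ν.map ΦN)) Filter.atTop := by
        refine Filter.liminf_le_liminf (Filter.Eventually.of_forall fun n => ?_)
        have hc : (0:EReal) ≤ ((((2:ℝ)^n)⁻¹ : ℝ) : EReal) := by
          apply EReal.coe_nonneg.2
          positivity
        calc ∑ i : Fin l, ((((2:ℝ)^n)⁻¹ : ℝ) : EReal)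
              * Hn 1 (2^n) (μ.map fun ω => coordPath l i (ΦM ω))
                (ν.map fun ω => coordPath l i (ΦN ω))
            = ((((2:ℝ)^n)⁻¹ : ℝ) : EReal) * ∑ i : Fin l,
                Hn 1 (2^n) (μ.map fun ω => coordPath l i (ΦM ω))
                  (ν.map fun ω => coordPath l i (ΦN ω)) :=
              (ereal_mul_finset_sum Finset.univ _ _ (fun i => hnonneg i (2^n))).symm
          _ ≤ ((((2:ℝ)^n)⁻¹ : ℝ) : EReal) * Hn l (2^n) (μ.map ΦM) (ν.map ΦN) :=
              mul_le_mul_of_nonneg_left (hpoint (2^n)) hc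

end
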